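/- arXiv:1208.4219 — 3 statements merged into one kernel-verified Lean document; each statement's English description precedes it below -/
import Mathlib

section
/- (Iterative Lemma, error-field estimate.) In addition to the hypotheses guaranteeing the solution ζ of 0 = ρ(w) + A(w)z + R(w,z) with ‖ζ(w)‖ ≤ K‖ρ(w)‖ on V+iν, suppose W : (V+iν)×(S+iσ) → 𝒲_ℂ is analytic with ‖W‖_{ν,σ} ≤ 1, and let ξ satisfy ξ ≥ 2Kδ, ν − ξ > 0, 0 < κ ≤ σ − ξ, with δ := ‖ρ‖_ν ≤ ½ κ² K^{-2} C_R^{-1}. Define ρ₊(w) := −ε ∂_w ζ(w) W(w, ζ(w)). Then for every w ∈ V+i(ν−ξ): ‖ρ₊(w)‖ ≤ (εK/ξ) δ ‖W(w,ζ(w))‖; in particular δ₊ := ‖ρ₊‖_{ν−ξ} ≤ (εK/ξ) δ. -/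
/-!
The new error field is `ε` times the derivative of `ζ` in the direction `W(w, ζ(w))`.
On `V + iν` the solution satisfies `‖ζ‖ ≤ K‖ρ‖ ≤ Kδ`, and the closed ball of radius `ξ` about
a point of `V + i(ν − ξ)` stays inside `V + iν`, so the Cauchy estimate bounds that derivative
by `(Kδ/ξ) ‖W(w, ζ(w))‖`. Since `Kδ ≤ ξ/2 < σ`, the point `ζ(w)` lies in `S + iσ`, where `‖W‖ ≤ 1`.
-/

open Metric

theorem Metric.closedBall_subset_thickening_of_mem_thickening {α : Type*} [PseudoMetricSpace α]
    {s : Set α} {x : α} {a : ℝ} (hx : x ∈ thickening a s) (b : ℝ) :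
    closedBall x b ⊆ thickening (b + a) s := by
  obtain ⟨v, hv, hxv⟩ := mem_thickening_iff.1 hx
  exact fun y hy ↦
    mem_thickening_iff.2 ⟨v, hv, (dist_triangle y x v).trans_lt (add_lt_add_of_le_of_lt hy hxv)⟩

/-- The one-variable Cauchy estimate, applied to `t ↦ f (w + t • u)` on the disc of radius
`r / ‖u‖`. -/
theorem norm_fderiv_apply_le_of_forall_mem_closedBall_norm_le
    {E F : Type*} [NormedAddCommGroup E] [NormedSpace ℂ E] [NormedAddCommGroup F] [NormedSpace ℂ F]
    {f : E → F} {w : E} {r M : ℝ} (hr : 0 < r) (hf : DifferentiableOn ℂ f (closedBall w r))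
    (hM : ∀ x ∈ closedBall w r, ‖f x‖ ≤ M) (u : E) :
    ‖fderiv ℂ f w u‖ ≤ M / r * ‖u‖ := by
  rcases eq_or_ne u 0 with rfl | hu
  · simp
  have hu' : 0 < ‖u‖ := norm_pos_iff.2 hu
  have hr' : 0 < r / ‖u‖ := div_pos hr hu'
  set line : ℂ → E := fun t ↦ w + t • u
  have hline_maps : Set.MapsTo line (closedBall 0 (r / ‖u‖)) (closedBall w r) := by
    intro t ht
    rw [mem_closedBall_zero_iff, le_div_iff₀ hu'] at ht
    simpa [line, norm_smul] using ht
  have hline : HasDerivAt line u 0 := by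
    simpa [line] using ((hasDerivAt_id (0 : ℂ)).smul_const u).const_add w
  have hderiv : deriv (f ∘ line) 0 = fderiv ℂ f w u := by
    have hfw : HasFDerivAt f (fderiv ℂ f w) (line 0) := by
      simpa [line] using (hf.differentiableAt (closedBall_mem_nhds w hr)).hasFDerivAt
    exact (hfw.comp_hasDerivAt 0 hline).deriv
  have hdiff : DifferentiableOn ℂ (f ∘ line) (closedBall 0 (r / ‖u‖)) :=
    hf.comp ((differentiable_id.smul_const u).const_add w).differentiableOn hline_maps
  calc ‖fderiv ℂ f w u‖ = ‖deriv (f ∘ line) 0‖ := by rw [hderiv]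
    _ ≤ M / (r / ‖u‖) :=
      Complex.norm_deriv_le_of_forall_mem_sphere_norm_le hr' (hdiff.diffContOnCl_ball subset_rfl)
        fun t ht ↦ hM _ (hline_maps (sphere_subset_closedBall ht))
    _ = M / r * ‖u‖ := by field_simp

theorem iterative_lemma_error_field_general
    {𝒲 𝒵 : Type*} [NormedAddCommGroup 𝒲] [NormedSpace ℂ 𝒲]
    [NormedAddCommGroup 𝒵] [NormedSpace ℂ 𝒵]
    (V : Set 𝒲) (S : Set 𝒵) (hS0 : (0 : 𝒵) ∈ S)
    (ν σ K κ δ ξ ε : ℝ)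
    (hK : 0 < K) (hε : 0 < ε)
    (ρ : 𝒲 → 𝒵)
    (hρ_bdd : ∀ w ∈ thickening ν V, ‖ρ w‖ ≤ δ)
    (ζ : 𝒲 → 𝒵) (hζ_an : DifferentiableOn ℂ ζ (thickening ν V))
    (hζ_bdd : ∀ w ∈ thickening ν V, ‖ζ w‖ ≤ K * ‖ρ w‖)
    (Wf : 𝒲 → 𝒵 → 𝒲)
    (hW_bdd : ∀ w ∈ thickening ν V, ∀ z ∈ thickening σ S, ‖Wf w z‖ ≤ 1)
    (hξ : 0 < ξ) (hξδ : 2 * K * δ ≤ ξ)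
    (hκ : 0 < κ) (hκσ : κ ≤ σ - ξ) :
    ∀ w ∈ thickening (ν - ξ) V,
      ‖-((ε : ℂ) • (fderiv ℂ ζ w) (Wf w (ζ w)))‖
          ≤ ε * K / ξ * δ * ‖Wf w (ζ w)‖ ∧
      ‖-((ε : ℂ) • (fderiv ℂ ζ w) (Wf w (ζ w)))‖ ≤ ε * K / ξ * δ := by
  intro w hw
  have hball : closedBall w ξ ⊆ thickening ν V := by
    simpa using closedBall_subset_thickening_of_mem_thickening hw ξ
  have hw' : w ∈ thickening ν V := hball (mem_closedBall_self hξ.le)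
  have hδ : 0 ≤ δ := (norm_nonneg _).trans (hρ_bdd w hw')
  have hζ_le : ∀ x ∈ thickening ν V, ‖ζ x‖ ≤ K * δ := fun x hx ↦
    (hζ_bdd x hx).trans (mul_le_mul_of_nonneg_left (hρ_bdd x hx) hK.le)
  have hζw : ζ w ∈ thickening σ S :=
    ball_subset_thickening hS0 σ <| mem_ball_zero_iff.2 <| by linarith [hζ_le w hw']
  set u := Wf w (ζ w)
  have hcauchy : ‖fderiv ℂ ζ w u‖ ≤ K * δ / ξ * ‖u‖ :=
    norm_fderiv_apply_le_of_forall_mem_closedBall_norm_le hξ (hζ_an.mono hball)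
      (fun x hx ↦ hζ_le x (hball hx)) u
  have hfirst : ‖-((ε : ℂ) • fderiv ℂ ζ w u)‖ ≤ ε * K / ξ * δ * ‖u‖ := by
    rw [norm_neg, norm_smul, Complex.norm_real, Real.norm_of_nonneg hε.le]
    calc ε * ‖fderiv ℂ ζ w u‖ ≤ ε * (K * δ / ξ * ‖u‖) := by gcongr
      _ = ε * K / ξ * δ * ‖u‖ := by ring
  exact ⟨hfirst, hfirst.trans (mul_le_of_le_one_right (by positivity) (hW_bdd w hw' _ hζw))⟩

/-- **Iterative Lemma, error-field estimate.**
With `ζ` the analytic solution of `0 = ρ(w) + A(w)z + R(w,z)` satisfying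
`‖ζ(w)‖ ≤ K‖ρ(w)‖`, `‖W‖_{ν,σ} ≤ 1`, `ξ ≥ 2Kδ`, `ν − ξ > 0`, `0 < κ ≤ σ − ξ`
and `δ ≤ ½κ²K⁻²C_R⁻¹`, the new error field
`ρ₊(w) = −ε ∂_w ζ(w) W(w,ζ(w))` satisfies
`‖ρ₊(w)‖ ≤ (εK/ξ) δ ‖W(w,ζ(w))‖ ≤ (εK/ξ) δ` on `V+i(ν−ξ)`. -/
theorem iterative_lemma_error_field
    {𝒲 𝒵 : Type*} [NormedAddCommGroup 𝒲] [NormedSpace ℂ 𝒲]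
    [NormedAddCommGroup 𝒵] [NormedSpace ℂ 𝒵] [CompleteSpace 𝒵]
    (V : Set 𝒲) (S : Set 𝒵) (hS0 : (0 : 𝒵) ∈ S)
    (ν σ K C_R κ δ ξ ε : ℝ)
    (hν : 0 < ν) (hσ : 0 < σ) (hK : 0 < K) (hCR : 0 < C_R) (hε : 0 < ε)
    (A Ainv : 𝒲 → 𝒵 →L[ℂ] 𝒵)
    (hA_inv : ∀ w ∈ thickening ν V,
      (A w).comp (Ainv w) = ContinuousLinearMap.id ℂ 𝒵 ∧
      (Ainv w).comp (A w) = ContinuousLinearMap.id ℂ 𝒵)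
    (hAinv_an : DifferentiableOn ℂ Ainv (thickening ν V))
    (hAinv_bdd : ∀ w ∈ thickening ν V, ‖Ainv w‖ ≤ K / 2)
    (ρ : 𝒲 → 𝒵) (hρ_an : DifferentiableOn ℂ ρ (thickening ν V))
    (hρ_bdd : ∀ w ∈ thickening ν V, ‖ρ w‖ ≤ δ)
    (R : 𝒲 → 𝒵 → 𝒵)
    (hR_an : DifferentiableOn ℂ (fun p : 𝒲 × 𝒵 => R p.1 p.2)
      (thickening ν V ×ˢ thickening σ S))
    (hR0 : ∀ w ∈ thickening ν V, R w 0 = 0)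
    (hdR0 : ∀ w ∈ thickening ν V, fderiv ℂ (R w) 0 = 0)
    (hR_bdd : ∀ w ∈ thickening ν V, ∀ z ∈ thickening σ S, ‖R w z‖ ≤ C_R)
    (ζ : 𝒲 → 𝒵) (hζ_an : DifferentiableOn ℂ ζ (thickening ν V))
    (hζ_sol : ∀ w ∈ thickening ν V, ρ w + A w (ζ w) + R w (ζ w) = 0)
    (hζ_bdd : ∀ w ∈ thickening ν V, ‖ζ w‖ ≤ K * ‖ρ w‖)
    (Wf : 𝒲 → 𝒵 → 𝒲)
    (hW_an : DifferentiableOn ℂ (fun p : 𝒲 × 𝒵 => Wf p.1 p.2)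
      (thickening ν V ×ˢ thickening σ S))
    (hW_bdd : ∀ w ∈ thickening ν V, ∀ z ∈ thickening σ S, ‖Wf w z‖ ≤ 1)
    (hξ : 0 < ξ) (hξδ : 2 * K * δ ≤ ξ) (hνξ : 0 < ν - ξ)
    (hκ : 0 < κ) (hκσ : κ ≤ σ - ξ)
    (hδ : δ ≤ κ ^ 2 / (2 * K ^ 2 * C_R)) :
    ∀ w ∈ thickening (ν - ξ) V,
      ‖-((ε : ℂ) • (fderiv ℂ ζ w) (Wf w (ζ w)))‖
          ≤ ε * K / ξ * δ * ‖Wf w (ζ w)‖ ∧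
      ‖-((ε : ℂ) • (fderiv ℂ ζ w) (Wf w (ζ w)))‖ ≤ ε * K / ξ * δ :=
  iterative_lemma_error_field_general V S hS0 ν σ K κ δ ξ ε hK hε ρ hρ_bdd ζ hζ_an hζ_bdd Wf hW_bdd
    hξ hξδ hκ hκσ
end

section
/- (Equilibria are preserved by the iteration step.) In the setting of the Hamiltonian iterative step, let ζ : V+iν → ℂ^{2d_𝒵} be the analytic solution of ∂_z H(w,ζ(w)) = 0, and let Ψ₊ : (w₊,z₊) ↦ (w,z) be the symplectic transformation defined implicitly by x₊ = x − ζ^x(u,v₊), y = y₊ + ζ^y(u,v₊), u₊ = u + ε∂_{v₊}g(u,v₊,x,y₊), v = v₊ + ε∂_u g(u,v₊,x,y₊), where g(u,v₊,x,y₊) = −⟨ζ^x(u,v₊), y₊⟩ + ⟨ζ^y(u,v₊), x⟩. Suppose w^e = (u^e,v^e) is such that ζ(w^e) = 0 (which holds whenever (w^e,0) is an equilibrium, since then ρ(w^e) = ∂_z H(w^e,0) = 0). Then the pair (w₊,z₊) = (w^e,0), (w,z) = (w^e,0) satisfies all four implicit equations; consequently, by local uniqueness of the transformation, Ψ₊(w^e,0)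 = (w^e,0), i.e. the equilibrium is contained in the improved slow manifold {z₊ = 0} and has the same coordinates (w^e,0) in the new variables. -/
open Metric

noncomputable section

/-- The pairing `⟨a,b⟩ = a₁b₁ + … + a_n b_n` on `ℂⁿ`. -/
def cdot {n : ℕ} (a b : Fin n → ℂ) : ℂ := ∑ i, a i * b i

/-- The complexified slow (or fast) phase space of `d` degrees of freedom:
pairs `(u,v)` (resp. `(x,y)`) of vectors in `ℂᵈ`. -/
abbrev PhC (d : ℕ) := (Fin d → ℂ) × (Fin d → ℂ)

theorem cdot_zero_right {n : ℕ} (a : Fin n → ℂ) : cdot a 0 = 0 := by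
  simp [cdot]

theorem equilibrium_preserved_by_iteration_general
    {dW dZ : ℕ}
    (ζ : PhC dW → PhC dZ)
    (g : (Fin dW → ℂ) → (Fin dW → ℂ) → (Fin dZ → ℂ) → (Fin dZ → ℂ) → ℂ)
    (hg : ∀ u v x y, g u v x y = -cdot (ζ (u, v)).1 y + cdot (ζ (u, v)).2 x)
    (we : PhC dW) (hζe : ζ we = 0) (ε : ℝ)
    -- the four implicit equations, for source point `(w₊,z₊) = (wᵉ,0)` and
    -- target point `(w,z)`
    (Eqs : PhC dW → PhC dZ → Prop)
    (hEqs : ∀ w z, Eqs w z ↔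
      ((0 : Fin dZ → ℂ) = z.1 - (ζ (w.1, we.2)).1 ∧
       z.2 = (0 : Fin dZ → ℂ) + (ζ (w.1, we.2)).2 ∧
       (∀ i, we.1 i = w.1 i +
         (ε : ℂ) * fderiv ℂ (fun v' => g w.1 v' z.1 0) we.2 (Pi.single i 1)) ∧
       (∀ i, w.2 i = we.2 i +
         (ε : ℂ) * fderiv ℂ (fun u' => g u' we.2 z.1 0) w.1 (Pi.single i 1))))
    (Ψplus : PhC dW × PhC dZ → PhC dW × PhC dZ)
    -- local uniqueness of the implicitly defined transformation at `(wᵉ,0)`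
    (huniq : ∀ w z, Eqs w z → (w, z) = Ψplus (we, 0)) :
    Eqs we 0 ∧ Ψplus (we, 0) = (we, (0 : PhC dZ)) := by
  -- `g` is linear in `(x, y₊)`, so both gradient corrections vanish at `x = y₊ = 0`
  have hg_zero : ∀ u v, g u v 0 0 = 0 := fun u v => by
    simp only [hg, cdot_zero_right, neg_zero, add_zero]
  have hEq : Eqs we 0 := by
    rw [hEqs]
    simp only [Prod.fst_zero, Prod.snd_zero, Prod.mk.eta, hζe, hg_zero, fderiv_const_apply,
      zero_apply, mul_zero, add_zero, sub_zero, and_self, implies_true]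
  exact ⟨hEq, (huniq we 0 hEq).symm⟩

/-- **Equilibria are preserved by the Hamiltonian iteration step.**
If `ζ(wᵉ) = 0`, then `(w₊,z₊) = (wᵉ,0)`, `(w,z) = (wᵉ,0)` satisfies the four
implicit equations `x₊ = x − ζˣ(u,v₊)`, `y = y₊ + ζʸ(u,v₊)`,
`u₊ = u + ε∂_{v₊}g`, `v = v₊ + ε∂_u g` defining the symplectic transformation
`Ψ₊`; consequently, by local uniqueness, `Ψ₊(wᵉ,0) = (wᵉ,0)`. -/
theorem equilibrium_preserved_by_iteration
    {dW dZ : ℕ} (ν : ℝ) (V : Set (PhC dW))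
    (ζ : PhC dW → PhC dZ)
    (hζ_an : DifferentiableOn ℂ ζ (thickening ν V))
    (g : (Fin dW → ℂ) → (Fin dW → ℂ) → (Fin dZ → ℂ) → (Fin dZ → ℂ) → ℂ)
    (hg : ∀ u v x y, g u v x y = -cdot (ζ (u, v)).1 y + cdot (ζ (u, v)).2 x)
    (we : PhC dW) (hζe : ζ we = 0) (ε : ℝ)
    -- the four implicit equations, for source point `(w₊,z₊) = (wᵉ,0)` and
    -- target point `(w,z)`
    (Eqs : PhC dW → PhC dZ → Prop)
    (hEqs : ∀ w z, Eqs w z ↔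
      ((0 : Fin dZ → ℂ) = z.1 - (ζ (w.1, we.2)).1 ∧
       z.2 = (0 : Fin dZ → ℂ) + (ζ (w.1, we.2)).2 ∧
       (∀ i, we.1 i = w.1 i +
         (ε : ℂ) * fderiv ℂ (fun v' => g w.1 v' z.1 0) we.2 (Pi.single i 1)) ∧
       (∀ i, w.2 i = we.2 i +
         (ε : ℂ) * fderiv ℂ (fun u' => g u' we.2 z.1 0) w.1 (Pi.single i 1))))
    (Ψplus : PhC dW × PhC dZ → PhC dW × PhC dZ)
    -- local uniqueness of the implicitly defined transformation at `(wᵉ,0)`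
    (huniq : ∀ w z, Eqs w z → (w, z) = Ψplus (we, 0)) :
    Eqs we 0 ∧ Ψplus (we, 0) = (we, (0 : PhC dZ)) :=
  equilibrium_preserved_by_iteration_general ζ g hg we hζe ε Eqs hEqs Ψplus huniq
end
end

section
/- (Counterexample to MacKay's pointwise conjecture: explicit second iteration.) Let f : ℝ → ℝ be continuously differentiable and ε ∈ ℝ. Suppose (w,z) : I → ℝ² solves ∂_t w = ε f(w), ∂_t z = ε w − z on an interval I. Define z₂(t) := z(t) − ε w(t) + ε² f(w(t)). Then z₂ solves ∂_t z₂ = ε³ f′(w) f(w) − z₂ on I. In particular, after two steps of the slow-manifold improvement iteration the error field equals ρ₂(w) = ε³ f′(w) f(w), which cannot be bounded from above by an expression containing |f(w)|² as a factor when f has a simple zero. -/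
/-!
Each step of the improvement iteration subtracts from the fast variable a function `ζ` of the
slow one. By the chain rule along `w' = ε f(w)`, if `z' = ρ(w) - z` then
`(z - ζ(w))' = ρ(w) - ζ(w) - ζ'(w) ε f(w) - (z - ζ(w))`; choosing `ζ = ρ` leaves the error field
`-ζ'(w) ε f(w)`. Applying this with `ζ₀ = ε·id` and then `ζ₁ = -ε² f` gives `ρ₂ = ε³ f' f`.
-/

theorem hasDerivAt_fast_sub_comp_slow {ε t ζ' : ℝ} {f ρ ζ w z : ℝ → ℝ}
    (hw : HasDerivAt w (ε * f (w t)) t) (hz : HasDerivAt z (ρ (w t) - z t) t)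
    (hζ : HasDerivAt ζ ζ' (w t)) :
    HasDerivAt (fun s => z s - ζ (w s))
      (ρ (w t) - ζ (w t) - ζ' * (ε * f (w t)) - (z t - ζ (w t))) t :=
  (hz.sub (hζ.comp t hw)).congr_deriv (by ring)

/-- **Counterexample to MacKay's pointwise conjecture: explicit second iteration.**
For the planar slow-fast system `∂_t w = ε f(w)`, `∂_t z = ε w − z`,
the second improvement step `z₂ := z − εw + ε²f(w)` solves
`∂_t z₂ = ε³ f′(w) f(w) − z₂`, i.e. the error field after two steps is
`ρ₂(w) = ε³ f′(w) f(w)`. -/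
theorem mackay_counterexample_second_iteration
    {f : ℝ → ℝ} (hf : ContDiff ℝ 1 f) (ε : ℝ)
    {I : Set ℝ} {w z : ℝ → ℝ}
    (hw : ∀ t ∈ I, HasDerivAt w (ε * f (w t)) t)
    (hz : ∀ t ∈ I, HasDerivAt z (ε * w t - z t) t) :
    ∀ t ∈ I,
      HasDerivAt (fun s => z s - ε * w s + ε ^ 2 * f (w s))
        (ε ^ 3 * deriv f (w t) * f (w t)
          - (z t - ε * w t + ε ^ 2 * f (w t))) t := by
  intro t ht
  have hf' : HasDerivAt f (deriv f (w t)) (w t) :=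
    (hf.differentiable one_ne_zero (w t)).hasDerivAt
  have hz₁ : HasDerivAt (fun s => z s - ε * w s) (-(ε ^ 2 * f (w t)) - (z t - ε * w t)) t :=
    (hasDerivAt_fast_sub_comp_slow (ρ := fun x => ε * x) (hw t ht) (hz t ht)
      ((hasDerivAt_id (w t)).const_mul ε)).congr_deriv (by ring)
  have hz₂ := hasDerivAt_fast_sub_comp_slow (ρ := fun x => -(ε ^ 2 * f x))
    (ζ := fun x => -(ε ^ 2 * f x)) (hw t ht) hz₁ (hf'.const_mul (ε ^ 2)).neg
  simp only [sub_neg_eq_add] at hz₂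
  exact hz₂.congr_deriv (by ring)
end
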